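/- arXiv:2106.07736 — 2 statements merged into one kernel-verified Lean document; each statement's English description precedes it below -/
import Mathlib

section
/- There exists an absolute constant C > 0 with the following property. Assume 0 < θ ≤ 1/9 and C⋆ ≥ 1/5, and suppose sup over unit q of ‖grad F(q) − grad f(q)‖₂ ≤ δ₁ with δ₁ ≤ 5×10⁻⁵ and sup over unit q of ‖Hess F(q) − Hess f(q)‖_op ≤ δ₂ with δ₂ ≤ 10⁻³. Let q ∈ ℝ^p be a unit vector with grad F(q) = 0 and ‖Aᵀq‖_∞² ≥ C⋆; write ζ = Aᵀq and b = max over j of |⟨grad f(q) − grad F(q), a_j⟩|. If there exists an index i such that |ζ_i| ≥ √(α(q)) − 2b/α(q) and |ζ_j| ≤ 2b/α(q) for all j ≠ i, then for some sign s ∈ {+1,−1} one has ‖q − s·a_i‖₂² ≤ C·δ₁, and moreover vᵀ Hess F(q) v > 0 for every unit vector v with vᵀq = 0. -/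
open Matrix MeasureTheory ProbabilityTheory Real
open scoped BigOperators ENNReal

noncomputable section

/-- squared Euclidean norm -/
def l2sq {m : ℕ} (v : Fin m → ℝ) : ℝ := ∑ i, v i ^ 2

/-- fourth power of the ℓ₄ norm -/
def l4p4 {m : ℕ} (v : Fin m → ℝ) : ℝ := ∑ i, v i ^ 4

/-- Euclidean norm -/
def l2norm {m : ℕ} (v : Fin m → ℝ) : ℝ := Real.sqrt (l2sq v)

/-- squared sup-norm -/
def linfSq {m : ℕ} (v : Fin m → ℝ) : ℝ := ⨆ i, (v i) ^ 2

/-- projection onto the orthogonal complement of q -/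
def proj {p : ℕ} (q : Fin p → ℝ) : Matrix (Fin p) (Fin p) ℝ := 1 - Matrix.vecMulVec q q

def zeta {p r : ℕ} (A : Matrix (Fin p) (Fin r) ℝ) (q : Fin p → ℝ) : Fin r → ℝ := Aᵀ *ᵥ q

/-- population objective -/
def fpop {p r : ℕ} (θ : ℝ) (A : Matrix (Fin p) (Fin r) ℝ) (q : Fin p → ℝ) : ℝ :=
  -(1/4) * ((1 - θ) * l4p4 (zeta A q) + θ * (l2sq (zeta A q)) ^ 2)

/-- Riemannian gradient of the population objective -/
def gradf {p r : ℕ} (θ : ℝ) (A : Matrix (Fin p) (Fin r) ℝ) (q : Fin p → ℝ) : Fin p → ℝ :=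
  -((proj q) *ᵥ ((1 - θ) • (A *ᵥ fun j => (zeta A q j) ^ 3)
      + (θ * l2sq (zeta A q)) • (A *ᵥ zeta A q)))

/-- Riemannian Hessian of the population objective -/
def hessf {p r : ℕ} (θ : ℝ) (A : Matrix (Fin p) (Fin r) ℝ) (q : Fin p → ℝ) :
    Matrix (Fin p) (Fin p) ℝ :=
  -((1 - θ) • (proj q *
      ((3 : ℝ) • (A * Matrix.diagonal (fun j => (zeta A q j) ^ 2) * Aᵀ)
        - l4p4 (zeta A q) • (1 : Matrix (Fin p) (Fin p) ℝ)) * proj q))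
  - θ • (proj q *
      (l2sq (zeta A q) • (A * Aᵀ)
        + (2 : ℝ) • (A * Aᵀ * Matrix.vecMulVec q q * (A * Aᵀ))
        - (l2sq (zeta A q)) ^ 2 • (1 : Matrix (Fin p) (Fin p) ℝ)) * proj q)

/-- quadratic form -/
def qform {p : ℕ} (M : Matrix (Fin p) (Fin p) ℝ) (v : Fin p → ℝ) : ℝ := v ⬝ᵥ (M *ᵥ v)

/-- α(q) -/
def alphaf {p r : ℕ} (θ : ℝ) (A : Matrix (Fin p) (Fin r) ℝ) (q : Fin p → ℝ) : ℝ :=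
  l4p4 (zeta A q) + (θ / (1 - θ)) * ((l2sq (zeta A q)) ^ 2 - l2sq (zeta A q))

/-- columns of X -/
def colX {r n : ℕ} (X : Matrix (Fin r) (Fin n) ℝ) (k : Fin n) : Fin r → ℝ := fun i => X i k

/-- finite-sample objective -/
def Ffun {p r n : ℕ} (θ σ : ℝ) (A : Matrix (Fin p) (Fin r) ℝ) (X : Matrix (Fin r) (Fin n) ℝ)
    (q : Fin p → ℝ) : ℝ :=
  -(1 / (12 * θ * σ ^ 4 * n)) * ∑ k : Fin n, (q ⬝ᵥ (A *ᵥ colX X k)) ^ 4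

/-- Riemannian gradient of the finite-sample objective -/
def gradF {p r n : ℕ} (θ σ : ℝ) (A : Matrix (Fin p) (Fin r) ℝ) (X : Matrix (Fin r) (Fin n) ℝ)
    (q : Fin p → ℝ) : Fin p → ℝ :=
  (-(1 / (3 * θ * σ ^ 4 * n))) •
    ((proj q) *ᵥ ∑ k : Fin n, ((q ⬝ᵥ (A *ᵥ colX X k)) ^ 3) • (A *ᵥ colX X k))

/-- Riemannian Hessian of the finite-sample objective -/
def hessF {p r n : ℕ} (θ σ : ℝ) (A : Matrix (Fin p) (Fin r) ℝ) (X : Matrix (Fin r) (Fin n) ℝ)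
    (q : Fin p → ℝ) : Matrix (Fin p) (Fin p) ℝ :=
  (-(1 / (3 * θ * σ ^ 4 * n))) •
    ∑ k : Fin n, proj q *
      ((3 * (q ⬝ᵥ (A *ᵥ colX X k)) ^ 2) • Matrix.vecMulVec (A *ᵥ colX X k) (A *ᵥ colX X k)
        - ((q ⬝ᵥ (A *ᵥ colX X k)) ^ 4) • (1 : Matrix (Fin p) (Fin p) ℝ)) * proj q

/-- spectral norm of a rectangular matrix -/
def opNorm {m n : ℕ} (M : Matrix (Fin m) (Fin n) ℝ) : ℝ :=
  ‖LinearMap.toContinuousLinearMap (Matrix.toEuclideanLin M)‖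

/-- Bernoulli(θ) law on ℝ -/
def bernoulliReal (θ : ℝ) : Measure ℝ :=
  ENNReal.ofReal θ • Measure.dirac (1 : ℝ) + ENNReal.ofReal (1 - θ) • Measure.dirac (0 : ℝ)

/-- Bernoulli–Gaussian law BG(θ, σ²) on ℝ -/
def bgLaw (θ σ2 : ℝ) : Measure ℝ :=
  ((bernoulliReal θ).prod (gaussianReal 0 σ2.toNNReal)).map fun p => p.1 * p.2

/-- law of a random vector in ℝ^r with i.i.d. BG(θ, σ²) entries -/
def bgVec (r : ℕ) (θ σ2 : ℝ) : Measure (Fin r → ℝ) :=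
  Measure.pi fun _ : Fin r => bgLaw θ σ2

/-- law of a random r×n matrix with i.i.d. BG(θ, σ²) entries -/
def bgMatrix (r n : ℕ) (θ σ2 : ℝ) : Measure (Fin r → Fin n → ℝ) :=
  Measure.pi fun _ : Fin r => Measure.pi fun _ : Fin n => bgLaw θ σ2



/-!
At a critical point of `F` the population gradient is small, `‖grad f(q)‖ ≤ δ₁`, and its
coordinate along the column `a_j` is `(1 - θ)(α ζ_j - ζ_j³)`. Hence every `ζ_j` is either `≈ 0`
or satisfies `ζ_j² ≈ α`. A coordinate with `ζ_J² ≥ 1/5` pins `α ≈ ζ_J²`, so `J = i` and the other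
coordinates are `O(δ₁)`; comparing `α ≤ ‖ζ‖₄⁴ ≤ ζ_i² ‖ζ‖₂²` with `ζ_i² ≈ α` shows that no mass of
`q` is lost outside the column space, so `ζ_i² ≥ 1 - 16 δ₁` and `‖q ∓ a_i‖² ≤ 2(1 - ζ_i²) ≤ 32 δ₁`.
Near `±a_i` the Riemannian Hessian of `f` is at least `1/2` on the tangent space, and `Hess F`
differs from it by at most `δ₂ ≤ 10⁻³`.
-/

section EuclideanFacts

variable {m : ℕ}

lemma l2sq_nonneg (x : Fin m → ℝ) : 0 ≤ l2sq x :=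
  Finset.sum_nonneg fun _ _ => sq_nonneg _

lemma dotProduct_self_eq_l2sq (x : Fin m → ℝ) : x ⬝ᵥ x = l2sq x := by
  simp [dotProduct, l2sq, sq]

lemma sq_dotProduct_le (x y : Fin m → ℝ) : (x ⬝ᵥ y) ^ 2 ≤ l2sq x * l2sq y := by
  simpa [dotProduct, l2sq] using Finset.sum_mul_sq_le_sq_mul_sq Finset.univ x y

lemma l2sq_sub_smul (x y : Fin m → ℝ) (t : ℝ) :
    l2sq (x - t • y) = l2sq x - 2 * t * (x ⬝ᵥ y) + t ^ 2 * l2sq y := by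
  simp only [← dotProduct_self_eq_l2sq, sub_dotProduct, dotProduct_sub, smul_dotProduct,
    dotProduct_smul, smul_eq_mul, dotProduct_comm y x]
  ring

lemma l2sq_neg (x : Fin m → ℝ) : l2sq (-x) = l2sq x := by
  simp [l2sq]

lemma sq_le_l2sq (x : Fin m → ℝ) (j : Fin m) : x j ^ 2 ≤ l2sq x :=
  Finset.single_le_sum (f := fun j => x j ^ 2) (fun _ _ => sq_nonneg _) (Finset.mem_univ j)

lemma l4p4_le_mul_l2sq {x : Fin m → ℝ} {M : ℝ} (hM : ∀ j, x j ^ 2 ≤ M) :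
    l4p4 x ≤ M * l2sq x := by
  rw [l4p4, l2sq, Finset.mul_sum]
  exact Finset.sum_le_sum fun j _ => by nlinarith [hM j, sq_nonneg (x j)]

lemma exists_linfSq_le [Nonempty (Fin m)] (x : Fin m → ℝ) :
    ∃ J, linfSq x ≤ x J ^ 2 ∧ ∀ j, x j ^ 2 ≤ x J ^ 2 := by
  obtain ⟨J, -, hJ⟩ := Finset.exists_max_image Finset.univ (fun j => x j ^ 2) Finset.univ_nonempty
  exact ⟨J, ciSup_le fun j => hJ j (Finset.mem_univ j), fun j => hJ j (Finset.mem_univ j)⟩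

lemma ciSup_abs_le_of_sum_sq_le [Nonempty (Fin m)] {e : Fin m → ℝ} {δ : ℝ} (hδ : 0 ≤ δ)
    (h : ∑ j, e j ^ 2 ≤ δ ^ 2) : ⨆ j, |e j| ≤ δ :=
  ciSup_le fun j => abs_le_of_sq_le_sq
    ((Finset.single_le_sum (f := fun j => e j ^ 2) (fun _ _ => sq_nonneg _)
      (Finset.mem_univ j)).trans h) hδ

lemma abs_qform_le_opNorm (M : Matrix (Fin m) (Fin m) ℝ) {v : Fin m → ℝ} (hv : l2sq v = 1) :
    |qform M v| ≤ opNorm M := by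
  have hnorm : ∀ x : Fin m → ℝ, ‖WithLp.toLp 2 x‖ = √(l2sq x) := fun x => by
    simp [EuclideanSpace.norm_eq, l2sq]
  have hop : ‖WithLp.toLp 2 (M *ᵥ v)‖ ≤ opNorm M * ‖WithLp.toLp 2 v‖ :=
    (LinearMap.toContinuousLinearMap (Matrix.toEuclideanLin M)).le_opNorm _
  rw [hnorm v, hv, Real.sqrt_one, mul_one] at hop
  calc |qform M v| = √(qform M v ^ 2) := (Real.sqrt_sq_eq_abs _).symm
    _ ≤ √(l2sq (M *ᵥ v)) := by
      gcongr
      simpa [qform, hv] using sq_dotProduct_le v (M *ᵥ v)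
    _ = ‖WithLp.toLp 2 (M *ᵥ v)‖ := (hnorm _).symm
    _ ≤ opNorm M := hop

lemma qform_sub (M N : Matrix (Fin m) (Fin m) ℝ) (v : Fin m → ℝ) :
    qform (M - N) v = qform M v - qform N v := by
  simp [qform, Matrix.sub_mulVec, dotProduct_sub]

end EuclideanFacts

section OrthonormalColumns

variable {p r : ℕ} {A : Matrix (Fin p) (Fin r) ℝ}

lemma dotProduct_mulVec_eq_transpose (y : Fin p → ℝ) (x : Fin r → ℝ) :
    y ⬝ᵥ (A *ᵥ x) = (Aᵀ *ᵥ y) ⬝ᵥ x := by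
  rw [dotProduct_mulVec, mulVec_transpose]

lemma dotProduct_col (y : Fin p → ℝ) (j : Fin r) :
    y ⬝ᵥ (fun k => A k j) = (Aᵀ *ᵥ y) j := by
  rw [dotProduct_comm]; rfl

lemma transpose_mulVec_mulVec (hA : Aᵀ * A = 1) (x : Fin r → ℝ) : Aᵀ *ᵥ (A *ᵥ x) = x := by
  rw [mulVec_mulVec, hA, one_mulVec]

lemma mulVec_dotProduct_col (hA : Aᵀ * A = 1) (x : Fin r → ℝ) (j : Fin r) :
    (A *ᵥ x) ⬝ᵥ (fun k => A k j) = x j := by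
  rw [dotProduct_col, transpose_mulVec_mulVec hA]

lemma l2sq_col (hA : Aᵀ * A = 1) (j : Fin r) : l2sq (fun k => A k j) = 1 := by
  simpa [Matrix.mul_apply, l2sq, sq] using congrFun (congrFun hA j) j

lemma l2sq_transpose_mulVec_le (hA : Aᵀ * A = 1) (y : Fin p → ℝ) :
    l2sq (Aᵀ *ᵥ y) ≤ l2sq y := by
  set h := Aᵀ *ᵥ y
  have hAh : l2sq (A *ᵥ h) = l2sq h := by
    rw [← dotProduct_self_eq_l2sq, dotProduct_mulVec_eq_transpose, transpose_mulVec_mulVec hA,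
      dotProduct_self_eq_l2sq]
  have hyAh : y ⬝ᵥ (A *ᵥ h) = l2sq h := by
    rw [dotProduct_mulVec_eq_transpose, dotProduct_self_eq_l2sq]
  have hcs := sq_dotProduct_le y (A *ᵥ h)
  rw [hyAh, hAh] at hcs
  nlinarith [l2sq_nonneg h, l2sq_nonneg y]

lemma sum_sq_dotProduct_col_le (hA : Aᵀ * A = 1) (y : Fin p → ℝ) :
    ∑ j, (y ⬝ᵥ fun k => A k j) ^ 2 ≤ l2sq y := by
  simp only [dotProduct_col]
  exact l2sq_transpose_mulVec_le hA y

lemma l2sq_zeta_le (hA : Aᵀ * A = 1) {q : Fin p → ℝ} (hq : l2sq q = 1) :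
    l2sq (zeta A q) ≤ 1 :=
  hq ▸ l2sq_transpose_mulVec_le hA q

lemma proj_mulVec (q u : Fin p → ℝ) : proj q *ᵥ u = u - (q ⬝ᵥ u) • q := by
  rw [proj, sub_mulVec, one_mulVec, vecMulVec_mulVec, op_smul_eq_smul]

lemma exists_sign_l2sq_sub_smul_col_le (hA : Aᵀ * A = 1) {q : Fin p → ℝ} (hq : l2sq q = 1)
    (i : Fin r) :
    ∃ s : ℝ, (s = 1 ∨ s = -1) ∧ l2sq (q - s • fun k => A k i) ≤ 2 * (1 - zeta A q i ^ 2) := by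
  have hζi : zeta A q i ^ 2 ≤ 1 := (sq_le_l2sq _ i).trans (l2sq_zeta_le hA hq)
  have hdist : ∀ s : ℝ, l2sq (q - s • fun k => A k i) = 1 - 2 * s * zeta A q i + s ^ 2 := by
    intro s
    rw [l2sq_sub_smul, hq, dotProduct_col, l2sq_col hA, mul_one]
    rfl
  rcases le_or_gt 0 (zeta A q i) with h | h
  · exact ⟨1, Or.inl rfl, by rw [hdist]; nlinarith⟩
  · exact ⟨-1, Or.inr rfl, by rw [hdist]; nlinarith⟩

/-- Since `v ⊥ q`, `⟨v, a_i⟩ = ⟨v, a_i - ζ_i q⟩` and `‖a_i - ζ_i q‖² = 1 - ζ_i²`. -/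
lemma sq_transpose_mulVec_le_of_orthogonal (hA : Aᵀ * A = 1) {q v : Fin p → ℝ}
    (hq : l2sq q = 1) (hvq : v ⬝ᵥ q = 0) (i : Fin r) :
    (Aᵀ *ᵥ v) i ^ 2 ≤ l2sq v * (1 - zeta A q i ^ 2) := by
  have hcol : v ⬝ᵥ ((fun k => A k i) - zeta A q i • q) = (Aᵀ *ᵥ v) i := by
    rw [dotProduct_sub, dotProduct_smul, hvq, smul_zero, sub_zero, dotProduct_col]
  have hnorm : l2sq ((fun k => A k i) - zeta A q i • q) = 1 - zeta A q i ^ 2 := by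
    rw [l2sq_sub_smul, l2sq_col hA, hq, dotProduct_comm, dotProduct_col]
    simp only [zeta]
    ring
  simpa [hcol, hnorm] using sq_dotProduct_le v ((fun k => A k i) - zeta A q i • q)

end OrthonormalColumns

section PopulationObjective

variable {p r : ℕ} {A : Matrix (Fin p) (Fin r) ℝ}

lemma dotProduct_cube_eq_l4p4 (x : Fin r → ℝ) : x ⬝ᵥ (fun j => x j ^ 3) = l4p4 x := by
  simp only [dotProduct, l4p4]
  exact Finset.sum_congr rfl fun _ _ => by ring

lemma gradf_dotProduct_col (hA : Aᵀ * A = 1) {θ : ℝ} (hθ : θ ≠ 1) (q : Fin p → ℝ) (j : Fin r) :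
    gradf θ A q ⬝ᵥ (fun k => A k j) =
      (1 - θ) * (alphaf θ A q * zeta A q j - zeta A q j ^ 3) := by
  set ζ := zeta A q with hζ
  set u := (1 - θ) • (A *ᵥ fun j => ζ j ^ 3) + (θ * l2sq ζ) • (A *ᵥ ζ)
  have hqu : q ⬝ᵥ u = (1 - θ) * l4p4 ζ + θ * l2sq ζ ^ 2 := by
    simp only [u, dotProduct_add, dotProduct_smul, dotProduct_mulVec_eq_transpose]
    rw [← zeta, dotProduct_cube_eq_l4p4, dotProduct_self_eq_l2sq, smul_eq_mul, smul_eq_mul]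
    ring
  have hucol : u ⬝ᵥ (fun k => A k j) = (1 - θ) * ζ j ^ 3 + θ * l2sq ζ * ζ j := by
    simp only [u, add_dotProduct, smul_dotProduct, mulVec_dotProduct_col hA, smul_eq_mul]
  have hqcol : q ⬝ᵥ (fun k => A k j) = ζ j := dotProduct_col q j
  have h1θ : 1 - θ ≠ 0 := sub_ne_zero.mpr hθ.symm
  rw [gradf, proj_mulVec, neg_dotProduct, sub_dotProduct, smul_dotProduct, hucol, hqu, hqcol,
    smul_eq_mul, alphaf]
  field_simp
  ring

lemma alphaf_le_l4p4 {θ : ℝ} (hθ0 : 0 ≤ θ) (hθ1 : θ ≤ 1) {q : Fin p → ℝ}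
    (hζ : l2sq (zeta A q) ≤ 1) : alphaf θ A q ≤ l4p4 (zeta A q) := by
  have hT2 : l2sq (zeta A q) ^ 2 - l2sq (zeta A q) ≤ 0 := by
    nlinarith [l2sq_nonneg (zeta A q)]
  have := mul_nonpos_of_nonneg_of_nonpos (div_nonneg hθ0 (sub_nonneg.mpr hθ1)) hT2
  rw [alphaf]
  linarith

lemma sq_mul_sq_sub_alphaf_le (hA : Aᵀ * A = 1) {θ : ℝ} (hθ : θ ≤ 1/9)
    (q : Fin p → ℝ) (j : Fin r) :
    zeta A q j ^ 2 * (zeta A q j ^ 2 - alphaf θ A q) ^ 2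
      ≤ 81/64 * (gradf θ A q ⬝ᵥ fun k => A k j) ^ 2 := by
  rw [gradf_dotProduct_col hA (by linarith)]
  have h1θ : 64/81 ≤ (1 - θ) ^ 2 := by nlinarith
  nlinarith [mul_le_mul_of_nonneg_right h1θ
    (sq_nonneg (alphaf θ A q * zeta A q j - zeta A q j ^ 3))]

lemma sum_sq_mul_sq_sub_alphaf_le (hA : Aᵀ * A = 1) {θ : ℝ} (hθ : θ ≤ 1/9) (q : Fin p → ℝ) :
    ∑ j, zeta A q j ^ 2 * (zeta A q j ^ 2 - alphaf θ A q) ^ 2 ≤ 81/64 * l2sq (gradf θ A q) := by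
  calc ∑ j, zeta A q j ^ 2 * (zeta A q j ^ 2 - alphaf θ A q) ^ 2
      ≤ ∑ j, 81/64 * (gradf θ A q ⬝ᵥ fun k => A k j) ^ 2 :=
        Finset.sum_le_sum fun j _ => sq_mul_sq_sub_alphaf_le hA hθ q j
    _ ≤ 81/64 * l2sq (gradf θ A q) := by
        rw [← Finset.mul_sum]
        gcongr
        exact sum_sq_dotProduct_col_le hA _

lemma dotProduct_proj_mul_proj_mulVec {q v : Fin p → ℝ} (hqv : q ⬝ᵥ v = 0)
    (M : Matrix (Fin p) (Fin p) ℝ) :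
    v ⬝ᵥ ((proj q * M * proj q) *ᵥ v) = v ⬝ᵥ (M *ᵥ v) := by
  rw [← mulVec_mulVec, ← mulVec_mulVec, proj_mulVec q v, hqv, zero_smul, sub_zero, proj_mulVec,
    dotProduct_sub, dotProduct_smul, dotProduct_comm v q, hqv, smul_zero, sub_zero]

lemma dotProduct_mul_diagonal_mul_transpose_mulVec (d : Fin r → ℝ) (v : Fin p → ℝ) :
    v ⬝ᵥ ((A * diagonal d * Aᵀ) *ᵥ v) = ∑ j, d j * (Aᵀ *ᵥ v) j ^ 2 := by
  rw [← mulVec_mulVec, ← mulVec_mulVec, dotProduct_mulVec_eq_transpose]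
  simp only [dotProduct, mulVec_diagonal]
  exact Finset.sum_congr rfl fun _ _ => by ring

lemma dotProduct_mul_transpose_mulVec (v : Fin p → ℝ) :
    v ⬝ᵥ ((A * Aᵀ) *ᵥ v) = l2sq (Aᵀ *ᵥ v) := by
  rw [← mulVec_mulVec, dotProduct_mulVec_eq_transpose, dotProduct_self_eq_l2sq]

lemma dotProduct_mul_transpose_vecMulVec_mulVec (q v : Fin p → ℝ) :
    v ⬝ᵥ ((A * Aᵀ * vecMulVec q q * (A * Aᵀ)) *ᵥ v) = (zeta A q ⬝ᵥ (Aᵀ *ᵥ v)) ^ 2 := by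
  simp only [← mulVec_mulVec, vecMulVec_mulVec, op_smul_eq_smul, mulVec_smul, dotProduct_smul]
  rw [dotProduct_mulVec_eq_transpose v, dotProduct_mulVec_eq_transpose q, ← zeta,
    dotProduct_comm (Aᵀ *ᵥ v), smul_eq_mul, sq]

lemma qform_hessf {q v : Fin p → ℝ} (hqv : q ⬝ᵥ v = 0) (θ : ℝ) :
    qform (hessf θ A q) v =
      -((1 - θ) * (3 * ∑ j, zeta A q j ^ 2 * (Aᵀ *ᵥ v) j ^ 2 - l4p4 (zeta A q) * l2sq v))
      - θ * (l2sq (zeta A q) * l2sq (Aᵀ *ᵥ v) + 2 * (zeta A q ⬝ᵥ (Aᵀ *ᵥ v)) ^ 2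
          - l2sq (zeta A q) ^ 2 * l2sq v) := by
  simp only [qform, hessf, sub_mulVec, neg_mulVec, smul_mulVec, add_mulVec, dotProduct_sub,
    dotProduct_neg, dotProduct_add, dotProduct_smul, dotProduct_proj_mul_proj_mulVec hqv,
    dotProduct_mul_diagonal_mul_transpose_mulVec, dotProduct_mul_transpose_mulVec,
    dotProduct_mul_transpose_vecMulVec_mulVec, one_mulVec, dotProduct_self_eq_l2sq, smul_eq_mul]

end PopulationObjective

section DominantCoordinate

variable {r : ℕ}

lemma abs_sq_sub_le_of_sq_ge {x α b : ℝ} (hx : 1/5 ≤ x ^ 2) (hb : 0 ≤ b)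
    (h : x ^ 2 * (x ^ 2 - α) ^ 2 ≤ 81/64 * b ^ 2) : |x ^ 2 - α| ≤ 3 * b :=
  abs_le_of_sq_le_sq (by nlinarith [mul_le_mul_of_nonneg_right hx (sq_nonneg (x ^ 2 - α))])
    (by positivity)

lemma sum_erase_sq_le {ζ : Fin r → ℝ} {α c : ℝ} (i : Fin r) (hα : 19/100 ≤ α)
    (hsmall : ∀ j ≠ i, ζ j ^ 2 ≤ 1/10^6) (hsum : ∑ j, ζ j ^ 2 * (ζ j ^ 2 - α) ^ 2 ≤ c) :
    3/100 * ∑ j ∈ Finset.univ.erase i, ζ j ^ 2 ≤ c := by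
  rw [Finset.mul_sum]
  calc ∑ j ∈ Finset.univ.erase i, 3/100 * ζ j ^ 2
      ≤ ∑ j ∈ Finset.univ.erase i, ζ j ^ 2 * (ζ j ^ 2 - α) ^ 2 := by
        refine Finset.sum_le_sum fun j hj => ?_
        have hj := hsmall j (Finset.ne_of_mem_erase hj)
        nlinarith [mul_nonneg (sq_nonneg (ζ j)) (by nlinarith : (0 : ℝ) ≤ (ζ j ^ 2 - α) ^ 2 - 3/100)]
    _ ≤ ∑ j, ζ j ^ 2 * (ζ j ^ 2 - α) ^ 2 :=
        Finset.sum_le_sum_of_subset_of_nonneg (Finset.subset_univ _) fun _ _ _ => by positivity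
    _ ≤ c := hsum

lemma one_sub_le_sq_of_dominant {ζ : Fin r → ℝ} {α b δ : ℝ} (i : Fin r)
    (hδ : δ ≤ 1/20000) (hb : 0 ≤ b) (hbδ : b ≤ δ) (hζ : l2sq ζ ≤ 1) (hα : α ≤ l4p4 ζ)
    (hlarge : 1/5 ≤ linfSq ζ)
    (hcoord : ∀ j, ζ j ^ 2 * (ζ j ^ 2 - α) ^ 2 ≤ 81/64 * b ^ 2)
    (hsum : ∑ j, ζ j ^ 2 * (ζ j ^ 2 - α) ^ 2 ≤ 81/64 * δ ^ 2)
    (hsmall : ∀ j ≠ i, |ζ j| ≤ 2 * b / α) :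
    1 - 16 * δ ≤ ζ i ^ 2 ∧ ∀ j ≠ i, ζ j ^ 2 ≤ 121 * δ ^ 2 := by
  have : Nonempty (Fin r) := ⟨i⟩
  obtain ⟨J, hJlarge, hJmax⟩ := exists_linfSq_le ζ
  have hJ : 1/5 ≤ ζ J ^ 2 := hlarge.trans hJlarge
  obtain ⟨hαlo, hαhi⟩ := abs_le.mp (abs_sq_sub_le_of_sq_ge hJ hb (hcoord J))
  have hα19 : 19/100 ≤ α := by linarith
  have hsmall' : ∀ j ≠ i, ζ j ^ 2 ≤ 121 * δ ^ 2 := by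
    intro j hj
    have h11 : |ζ j| ≤ 11 * δ :=
      (hsmall j hj).trans (by rw [div_le_iff₀ (by linarith)]; nlinarith)
    nlinarith [sq_le_sq' (abs_le.mp h11).1 (abs_le.mp h11).2]
  obtain rfl : J = i := by
    by_contra hJi
    nlinarith [hsmall' J hJi]
  have hrest := sum_erase_sq_le J hα19 (fun j hj => (hsmall' j hj).trans (by nlinarith)) hsum
  have hmass : 1 - 15 * δ ≤ l2sq ζ := by
    -- `ζ_J² - 3b ≤ α ≤ ‖ζ‖₄⁴ ≤ ζ_J² ‖ζ‖₂²` and `ζ_J² ≥ 1/5`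
    have hT4 := l4p4_le_mul_l2sq hJmax
    nlinarith [mul_le_mul_of_nonneg_right hJ (sub_nonneg.mpr hζ)]
  have hsplit := Finset.add_sum_erase Finset.univ (fun j => ζ j ^ 2) (Finset.mem_univ J)
  rw [← l2sq] at hsplit
  exact ⟨by nlinarith, hsmall'⟩

lemma one_half_le_hessf_form {ζ w : Fin r → ℝ} {θ δ : ℝ} (i : Fin r) (hθ0 : 0 ≤ θ) (hθ : θ ≤ 1/9)
    (hδ0 : 0 ≤ δ) (hδ : δ ≤ 1/20000) (hζ : l2sq ζ ≤ 1) (hw : l2sq w ≤ 1)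
    (hi : 1 - 16 * δ ≤ ζ i ^ 2) (hsmall : ∀ j ≠ i, ζ j ^ 2 ≤ 121 * δ ^ 2)
    (hwi : w i ^ 2 ≤ 1 - ζ i ^ 2) :
    1/2 ≤ -((1 - θ) * (3 * ∑ j, ζ j ^ 2 * w j ^ 2 - l4p4 ζ))
      - θ * (l2sq ζ * l2sq w + 2 * (ζ ⬝ᵥ w) ^ 2 - l2sq ζ ^ 2) := by
  have hζi : ζ i ^ 2 ≤ 1 := (sq_le_l2sq ζ i).trans hζ
  have hS : ∑ j, ζ j ^ 2 * w j ^ 2 ≤ 16 * δ + 121 * δ ^ 2 := by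
    rw [← Finset.add_sum_erase _ _ (Finset.mem_univ i)]
    have hrest : ∑ j ∈ Finset.univ.erase i, ζ j ^ 2 * w j ^ 2
        ≤ ∑ j ∈ Finset.univ.erase i, 121 * δ ^ 2 * w j ^ 2 :=
      Finset.sum_le_sum fun j hj => by
        gcongr
        exact hsmall j (Finset.ne_of_mem_erase hj)
    have hw' : ∑ j ∈ Finset.univ.erase i, w j ^ 2 ≤ 1 :=
      (Finset.sum_le_sum_of_subset_of_nonneg (Finset.subset_univ _)
        fun _ _ _ => sq_nonneg _).trans hw
    rw [← Finset.mul_sum] at hrest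
    nlinarith [mul_le_mul_of_nonneg_right hζi (sq_nonneg (w i))]
  have hT4 : (1 - 16 * δ) ^ 2 ≤ l4p4 ζ := by
    have hi4 : ζ i ^ 4 ≤ l4p4 ζ :=
      Finset.single_le_sum (f := fun j => ζ j ^ 4) (fun _ _ => by positivity) (Finset.mem_univ i)
    nlinarith
  have hX : l2sq ζ * l2sq w + 2 * (ζ ⬝ᵥ w) ^ 2 - l2sq ζ ^ 2 ≤ 2 := by
    have hcs := sq_dotProduct_le ζ w
    have hζ0 := l2sq_nonneg ζ
    nlinarith [mul_le_mul_of_nonneg_left hw hζ0]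
  nlinarith [mul_le_mul_of_nonneg_left hX hθ0]

end DominantCoordinate

theorem stmt12 : ∃ C : ℝ, 0 < C ∧
    ∀ (p r n : ℕ), 1 ≤ r → r ≤ p → 1 ≤ n →
    ∀ (A : Matrix (Fin p) (Fin r) ℝ), Aᵀ * A = 1 →
    ∀ (X : Matrix (Fin r) (Fin n) ℝ) (θ σ Cstar δ1 δ2 b : ℝ),
      0 < θ → θ ≤ 1/9 → 0 < σ → 1/5 ≤ Cstar →
      δ1 ≤ 5/10^5 → δ2 ≤ 1/10^3 →
      (∀ q : Fin p → ℝ, l2sq q = 1 → l2norm (gradF θ σ A X q - gradf θ A q) ≤ δ1) →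
      (∀ q : Fin p → ℝ, l2sq q = 1 → opNorm (hessF θ σ A X q - hessf θ A q) ≤ δ2) →
      ∀ q : Fin p → ℝ, l2sq q = 1 → gradF θ σ A X q = 0 →
        Cstar ≤ linfSq (zeta A q) →
        b = (⨆ j : Fin r, |(gradf θ A q - gradF θ σ A X q) ⬝ᵥ (fun k => A k j)|) →
        ∀ i : Fin r,
          Real.sqrt (alphaf θ A q) - 2*b/(alphaf θ A q) ≤ |zeta A q i| →
          (∀ j : Fin r, j ≠ i → |zeta A q j| ≤ 2*b/(alphaf θ A q)) →
          (∃ s : ℝ, (s = 1 ∨ s = -1) ∧ l2sq (q - s • fun k => A k i) ≤ C * δ1) ∧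
          (∀ v : Fin p → ℝ, l2sq v = 1 → v ⬝ᵥ q = 0 →
            0 < qform (hessF θ σ A X q) v) := by
  refine ⟨32, by norm_num, ?_⟩
  intro p r n _ _ _ A hA X θ σ Cstar δ1 δ2 b hθ0 hθ _ hCstar hδ1 hδ2 hgrad hhess q hq hcrit
    hlarge hb i _ hsmall
  have : Nonempty (Fin r) := ⟨i⟩
  have hδ : δ1 ≤ 1/20000 := by norm_num at hδ1; linarith
  set g := gradf θ A q
  obtain ⟨hδ0, hg⟩ : 0 ≤ δ1 ∧ l2sq g ≤ δ1 ^ 2 := by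
    simpa [hcrit, l2norm, l2sq_neg, Real.sqrt_le_iff] using hgrad q hq
  rw [hcrit, sub_zero] at hb
  have hbj : ∀ j, |g ⬝ᵥ fun k => A k j| ≤ b :=
    fun j => hb ▸ le_ciSup (Set.finite_range fun j => |g ⬝ᵥ fun k => A k j|).bddAbove j
  have hbδ : b ≤ δ1 :=
    hb ▸ ciSup_abs_le_of_sum_sq_le hδ0 ((sum_sq_dotProduct_col_le hA g).trans hg)
  have hcoord : ∀ j, zeta A q j ^ 2 * (zeta A q j ^ 2 - alphaf θ A q) ^ 2 ≤ 81/64 * b ^ 2 :=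
    fun j => (sq_mul_sq_sub_alphaf_le hA hθ q j).trans (by rw [← sq_abs]; gcongr; exact hbj j)
  have hsum := (sum_sq_mul_sq_sub_alphaf_le hA hθ q).trans (by gcongr : _ ≤ 81/64 * δ1 ^ 2)
  have hζ := l2sq_zeta_le hA hq
  obtain ⟨hi, hj⟩ := one_sub_le_sq_of_dominant i hδ ((abs_nonneg _).trans (hbj i)) hbδ hζ
    (alphaf_le_l4p4 hθ0.le (by linarith) hζ) (hCstar.trans hlarge) hcoord hsum hsmall
  refine ⟨?_, fun v hv hvq => ?_⟩
  · obtain ⟨s, hs, hdist⟩ := exists_sign_l2sq_sub_smul_col_le hA hq i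
    exact ⟨s, hs, by linarith⟩
  · have hw := sq_transpose_mulVec_le_of_orthogonal hA hq hvq i
    rw [hv, one_mul] at hw
    have hpop : 1/2 ≤ qform (hessf θ A q) v := by
      rw [qform_hessf (by rwa [dotProduct_comm]), hv, mul_one, mul_one]
      exact one_half_le_hessf_form i hθ0.le hθ hδ0 hδ hζ
        (hv ▸ l2sq_transpose_mulVec_le hA v) hi hj hw
    have herr := (abs_qform_le_opNorm _ hv).trans (hhess q hq)
    rw [qform_sub, abs_le] at herr
    norm_num at hδ2
    linarith [herr.1]

end
end

section
/- There exists an absolute constant C > 0 with the following property. Let θ ∈ (0,1], r ≥ 1, and let x be a random vector in ℝ^r with i.i.d. BG(θ,1) entries. Then for every unit vector q ∈ ℝ^r, E[((1/(12θ))·(qᵀx)⁴)²] ≤ C/θ; equivalently, E[(qᵀx)⁸] ≤ 144·C·θ. -/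
open Matrix MeasureTheory ProbabilityTheory Real
open scoped BigOperators ENNReal

noncomputable section

/-!
Write `x = b * z` with `b` a Bernoulli(θ) mask and `z` standard Gaussian. Conditionally on `b`,
`q ⬝ᵥ x = (q * b) ⬝ᵥ z` is a centered Gaussian of variance `s = ∑ i, q i ^ 2 * b i ^ 2`, so
`E[(q ⬝ᵥ x) ^ 8] = E[s ^ 4] * E[g ^ 8]` with `g ~ N(0,1)`. Since `b i ∈ {0, 1}` and `‖q‖ = 1`
we have `0 ≤ s ≤ 1`, hence `s ^ 4 ≤ s` and `E[s ^ 4] ≤ E[s] = θ`.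
-/

open scoped NNReal

lemma isProbabilityMeasure_bernoulliReal {θ : ℝ} (h0 : 0 ≤ θ) (h1 : θ ≤ 1) :
    IsProbabilityMeasure (bernoulliReal θ) := by
  constructor
  simp [bernoulliReal, ← ENNReal.ofReal_add h0 (sub_nonneg.2 h1)]

lemma ae_sq_le_one_bernoulliReal (θ : ℝ) : ∀ᵐ b ∂bernoulliReal θ, b ^ 2 ≤ 1 := by
  simp only [bernoulliReal, ae_add_measure_iff]
  constructor <;> exact Measure.ae_smul_measure (by simp) _

lemma lintegral_ofReal_sq_bernoulliReal (θ : ℝ) :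
    ∫⁻ b, ENNReal.ofReal (b ^ 2) ∂(bernoulliReal θ) = ENNReal.ofReal θ := by
  simp [bernoulliReal, lintegral_add_measure]

lemma lintegral_ofReal_pow_sum_sq_pi_bernoulliReal_le {ι : Type*} [Fintype ι] {θ : ℝ}
    (h0 : 0 ≤ θ) (h1 : θ ≤ 1) (q : ι → ℝ) (hq : ∑ i, q i ^ 2 = 1) {k : ℕ} (hk : k ≠ 0) :
    ∫⁻ b, ENNReal.ofReal ((∑ i, (q i * b i) ^ 2) ^ k) ∂(Measure.pi fun _ => bernoulliReal θ)
      ≤ ENNReal.ofReal θ := by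
  have := isProbabilityMeasure_bernoulliReal h0 h1
  have hae : ∀ᵐ b ∂Measure.pi (fun _ : ι => bernoulliReal θ), ∀ i, b i ^ 2 ≤ 1 :=
    ae_all_iff.2 fun i =>
      (measurePreserving_eval _ i).quasiMeasurePreserving.ae (p := (· ^ 2 ≤ 1))
        (ae_sq_le_one_bernoulliReal θ)
  calc ∫⁻ b, ENNReal.ofReal ((∑ i, (q i * b i) ^ 2) ^ k) ∂(Measure.pi fun _ => bernoulliReal θ)
      ≤ ∫⁻ b, ∑ i, ENNReal.ofReal (q i ^ 2) * ENNReal.ofReal (b i ^ 2)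
          ∂(Measure.pi fun _ => bernoulliReal θ) := by
        refine lintegral_mono_ae (hae.mono fun b hb => ?_)
        have hle : ∑ i, (q i * b i) ^ 2 ≤ 1 := hq ▸ Finset.sum_le_sum fun i _ => by
          rw [mul_pow]
          exact mul_le_of_le_one_right (sq_nonneg _) (hb i)
        calc ENNReal.ofReal ((∑ i, (q i * b i) ^ 2) ^ k)
            ≤ ENNReal.ofReal (∑ i, (q i * b i) ^ 2) :=
              ENNReal.ofReal_le_ofReal (pow_le_of_le_one (by positivity) hle hk)
          _ = ∑ i, ENNReal.ofReal (q i ^ 2) * ENNReal.ofReal (b i ^ 2) := by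
              rw [ENNReal.ofReal_sum_of_nonneg fun _ _ => sq_nonneg _]
              simp_rw [mul_pow, ENNReal.ofReal_mul (sq_nonneg _)]
    _ = ∑ i, ENNReal.ofReal (q i ^ 2) * ENNReal.ofReal θ := by
        rw [lintegral_finsetSum _ fun i _ => by fun_prop]
        refine Finset.sum_congr rfl fun i _ => ?_
        rw [lintegral_const_mul _ (by fun_prop), ← lintegral_ofReal_sq_bernoulliReal θ]
        congr 1
        exact (measurePreserving_eval (fun _ : ι => bernoulliReal θ) i).lintegral_comp
          (f := fun t : ℝ => ENNReal.ofReal (t ^ 2)) (by fun_prop)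
    _ = ENNReal.ofReal θ := by
        rw [← Finset.sum_mul, ← ENNReal.ofReal_sum_of_nonneg fun _ _ => sq_nonneg _, hq,
          ENNReal.ofReal_one, one_mul]

lemma map_sum_mul_pi_gaussianReal {ι : Type*} [Fintype ι] (c : ι → ℝ) (s : Finset ι) :
    (Measure.pi fun _ : ι => gaussianReal 0 1).map (fun z => ∑ i ∈ s, c i * z i)
      = gaussianReal 0 (∑ i ∈ s, c i ^ 2).toNNReal := by
  classical
  induction s using Finset.induction_on with
  | empty => simp [gaussianReal_zero_var]
  | insert j s hj ih =>
    have hindep : iIndepFun (fun i (z : ι → ℝ) => c i * z i)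
        (Measure.pi fun _ : ι => gaussianReal 0 1) :=
      iIndepFun_pi (X := fun i (t : ℝ) => c i * t) fun _ => by fun_prop
    have hsum := (hindep.indepFun_finsetSum_of_notMem (fun _ => by fun_prop) hj).symm
    rw [Finset.sum_fn] at hsum
    have hj_law : (Measure.pi fun _ : ι => gaussianReal 0 1).map (fun z => c j * z j)
        = gaussianReal 0 (c j ^ 2).toNNReal := by
      refine (Measure.map_map (g := fun x : ℝ => c j * x) (f := fun z : ι → ℝ => z j)
          (measurable_const_mul _) (measurable_pi_apply j)).symm.trans ?_
      rw [(measurePreserving_eval _ j).map_eq, gaussianReal_map_const_mul]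
      congr 1
      · simp
      · ext; simp [sq_nonneg]
    have := gaussianReal_add_gaussianReal_of_indepFun hsum hj_law ih
    rw [add_zero, ← Real.toNNReal_add (sq_nonneg _)
      (Finset.sum_nonneg fun _ _ => sq_nonneg _)] at this
    simp only [Finset.sum_insert hj]
    exact this

lemma lintegral_ofReal_pow_gaussianReal (v : ℝ≥0) (k : ℕ) :
    ∫⁻ y, ENNReal.ofReal (y ^ (2 * k)) ∂gaussianReal 0 v
      = ENNReal.ofReal (v ^ k) * ∫⁻ y, ENNReal.ofReal (y ^ (2 * k)) ∂gaussianReal 0 1 := by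
  have hv : gaussianReal 0 v = (gaussianReal 0 1).map (√(v : ℝ) * ·) := by
    rw [gaussianReal_map_const_mul]
    congr 1
    · simp
    · ext; simp
  rw [hv, lintegral_map (by fun_prop) (by fun_prop), ← lintegral_const_mul _ (by fun_prop)]
  congr 1 with y
  rw [← ENNReal.ofReal_mul (by positivity), mul_pow, pow_mul]
  simp

lemma lintegral_ofReal_pow_sum_mul_pi_gaussianReal {ι : Type*} [Fintype ι] (c : ι → ℝ) (k : ℕ) :
    ∫⁻ z, ENNReal.ofReal ((∑ i, c i * z i) ^ (2 * k)) ∂(Measure.pi fun _ : ι => gaussianReal 0 1)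
      = ENNReal.ofReal ((∑ i, c i ^ 2) ^ k)
        * ∫⁻ y, ENNReal.ofReal (y ^ (2 * k)) ∂gaussianReal 0 1 := by
  rw [← lintegral_map (f := fun y => ENNReal.ofReal (y ^ (2 * k))) (by fun_prop) (by fun_prop),
    map_sum_mul_pi_gaussianReal, lintegral_ofReal_pow_gaussianReal,
    Real.coe_toNNReal _ (Finset.sum_nonneg fun _ _ => sq_nonneg _)]

lemma integrable_pow_gaussianReal (k : ℕ) :
    Integrable (fun y => y ^ (2 * k)) (gaussianReal 0 1) := by
  simpa [(even_two_mul k).pow_abs] using (memLp_id_gaussianReal (2 * k : ℕ)).integrable_norm_pow'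

lemma integral_pow_gaussianReal_pos {k : ℕ} : 0 < ∫ y, y ^ (2 * k) ∂gaussianReal 0 1 := by
  rw [integral_pos_iff_support_of_nonneg (fun y => (even_two_mul k).pow_nonneg y)
    (integrable_pow_gaussianReal k)]
  have h0 : gaussianReal 0 1 {0} = 0 :=
    gaussianReal_absolutelyContinuous 0 one_ne_zero Real.volume_singleton
  refine lt_of_lt_of_le ?_ (measure_mono (s := {0}ᶜ) fun y hy => pow_ne_zero _ hy)
  rw [prob_compl_eq_one_sub (measurableSet_singleton 0), h0]
  simp

lemma bgVec_eq_map_prod {θ : ℝ} (h0 : 0 ≤ θ) (h1 : θ ≤ 1) (r : ℕ) :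
    bgVec r θ 1 = ((Measure.pi fun _ : Fin r => bernoulliReal θ).prod
      (Measure.pi fun _ : Fin r => gaussianReal 0 1)).map (fun p => p.1 * p.2) := by
  have := isProbabilityMeasure_bernoulliReal h0 h1
  rw [← (measurePreserving_arrowProdEquivProdArrow ℝ ℝ (Fin r) _ _).map_eq,
    Measure.map_map (by fun_prop) (MeasurableEquiv.measurable _), bgVec, bgLaw,
    Real.toNNReal_one, ← Measure.pi_map_pi fun _ => by fun_prop]
  rfl

lemma lintegral_ofReal_pow_dotProduct_bgVec_le {r : ℕ} {θ : ℝ} (h0 : 0 ≤ θ) (h1 : θ ≤ 1)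
    (q : Fin r → ℝ) (hq : l2sq q = 1) {k : ℕ} (hk : k ≠ 0) :
    ∫⁻ x, ENNReal.ofReal ((q ⬝ᵥ x) ^ (2 * k)) ∂bgVec r θ 1
      ≤ ENNReal.ofReal θ * ∫⁻ y, ENNReal.ofReal (y ^ (2 * k)) ∂gaussianReal 0 1 := by
  rw [bgVec_eq_map_prod h0 h1, lintegral_map (by fun_prop) (by fun_prop),
    lintegral_prod _ (by fun_prop)]
  have hgauss (b : Fin r → ℝ) :
      ∫⁻ z, ENNReal.ofReal ((q ⬝ᵥ (b * z)) ^ (2 * k)) ∂(Measure.pi fun _ => gaussianReal 0 1)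
        = ENNReal.ofReal ((∑ i, (q i * b i) ^ 2) ^ k)
          * ∫⁻ y, ENNReal.ofReal (y ^ (2 * k)) ∂gaussianReal 0 1 := by
    simpa [dotProduct, mul_assoc] using lintegral_ofReal_pow_sum_mul_pi_gaussianReal (q * b) k
  simp_rw [hgauss]
  rw [lintegral_mul_const _ (by fun_prop)]
  gcongr
  exact lintegral_ofReal_pow_sum_sq_pi_bernoulliReal_le h0 h1 q hq hk

lemma integral_pow_dotProduct_bgVec_le {r : ℕ} {θ : ℝ} (h0 : 0 ≤ θ) (h1 : θ ≤ 1)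
    (q : Fin r → ℝ) (hq : l2sq q = 1) {k : ℕ} (hk : k ≠ 0) :
    ∫ x, (q ⬝ᵥ x) ^ (2 * k) ∂bgVec r θ 1 ≤ θ * ∫ y, y ^ (2 * k) ∂gaussianReal 0 1 := by
  have hpow : ∀ y : ℝ, 0 ≤ y ^ (2 * k) := (even_two_mul k).pow_nonneg
  have hbound := lintegral_ofReal_pow_dotProduct_bgVec_le h0 h1 q hq hk
  rw [← ofReal_integral_eq_lintegral_ofReal (integrable_pow_gaussianReal k) (ae_of_all _ hpow),
    ← ENNReal.ofReal_mul h0] at hbound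
  rw [integral_eq_lintegral_of_nonneg_ae (ae_of_all _ fun x => hpow _) (by fun_prop)]
  exact ENNReal.toReal_le_of_le_ofReal (mul_nonneg h0 (integral_nonneg hpow)) hbound

theorem stmt19 : ∃ C : ℝ, 0 < C ∧
    ∀ (r : ℕ) (θ : ℝ), 1 ≤ r → 0 < θ → θ ≤ 1 →
    ∀ q : Fin r → ℝ, l2sq q = 1 →
      (∫ x : Fin r → ℝ, ((1/(12*θ)) * (q ⬝ᵥ x)^4)^2 ∂(bgVec r θ 1)) ≤ C/θ ∧
      (∫ x : Fin r → ℝ, (q ⬝ᵥ x)^8 ∂(bgVec r θ 1)) ≤ 144 * C * θ := by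
  set M := ∫ y, y ^ (2 * 4) ∂gaussianReal 0 1
  have hM : 0 < M := integral_pow_gaussianReal_pos
  refine ⟨M / 144, by positivity, fun r θ _ h0 h1 q hq => ?_⟩
  have h8 : ∫ x, (q ⬝ᵥ x) ^ 8 ∂bgVec r θ 1 ≤ θ * M :=
    integral_pow_dotProduct_bgVec_le h0.le h1 q hq four_ne_zero
  constructor
  · simp_rw [mul_pow, ← pow_mul]
    rw [integral_const_mul]
    calc (1 / (12 * θ)) ^ 2 * ∫ x, (q ⬝ᵥ x) ^ (4 * 2) ∂bgVec r θ 1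
        ≤ (1 / (12 * θ)) ^ 2 * (θ * M) := by gcongr
      _ = M / 144 / θ := by field_simp; ring
  · linarith

end
end
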